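/- arXiv:1606.07699 — 2 statements merged into one kernel-verified Lean document; each statement's English description precedes it below -/
import Mathlib

section
/- Let N ≥ 1 be a natural number and let φ ∈ ℂ[X,Y] be a nonzero binary form of degree N. Then 0 lies in the closure of the SL(2,ℂ)-orbit of φ in V_N if and only if there exist a nonzero linear form L ∈ ℂ[X,Y] and a natural number m with 2m > N such that L^m divides φ. -/
open MvPolynomial

/-- The substitution action of a `2 × 2` matrix `g = (a b; c d)` on binary forms:
`(φ·g)(X, Y) = φ (aX + bY, cX + dY)`. -/
noncomputable def substAct (g : Matrix (Fin 2) (Fin 2) ℂ) (φ : MvPolynomial (Fin 2) ℂ) :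
    MvPolynomial (Fin 2) ℂ :=
  aeval (fun i => C (g i 0) * X 0 + C (g i 1) * X 1) φ

/-- The coefficient vector of a polynomial, realizing the natural (coefficientwise)
topology on the finite-dimensional space of binary forms of degree `N`. -/
def toCoeff (φ : MvPolynomial (Fin 2) ℂ) : (Fin 2 →₀ ℕ) → ℂ := fun d => φ.coeff d

/-!
If `L ^ m ∣ φ` with `2m > N`, move `L` to `X 0` by an element of `SL(2,ℂ)`: every monomial
`X 0 ^ a * X 1 ^ b` of the new form has `a > b`, so the torus element `diag(c, c⁻¹)` multiplies its
coefficient by `c ^ (a - b)`, which tends to `0` with `c`.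

Conversely, suppose `φ·gₙ → 0`. Write `gₙ = Uₙ diag(tₙ, tₙ⁻¹) Wₙ` with `Uₙ, Wₙ` unitary and
`0 < tₙ ≤ 1` (Cartan decomposition). By compactness of `U(2)` we may assume `Uₙ → U` and `Wₙ → W`;
then `φ·Uₙ·diag(tₙ, tₙ⁻¹) = (φ·gₙ)·Wₙ⁻¹ → 0`. The torus element does not shrink the coefficients
of the monomials with `a ≤ b`, so these coefficients of `φ·U` vanish. Hence
`X 0 ^ (N / 2 + 1) ∣ φ·U`, and the linear form is `X 0` pulled back by `U⁻¹`.
-/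

namespace Matrix

open scoped ComplexOrder

theorem exists_unitary_mul_diagonal_mul_unitary {𝕜 n : Type*} [RCLike 𝕜] [Fintype n]
    [DecidableEq n] {g : Matrix n n 𝕜} (hg : IsUnit g) :
    ∃ U ∈ unitaryGroup n 𝕜, ∃ W ∈ unitaryGroup n 𝕜, ∃ s : n → ℝ,
      (∀ i, 0 < s i) ∧ g = U * diagonal (fun i => (s i : 𝕜)) * W := by
  have hH : (gᴴ * g).PosDef := .conjTranspose_mul_self g (mulVec_injective_iff_isUnit.2 hg)
  set V : Matrix n n 𝕜 := (hH.1.eigenvectorUnitary : Matrix n n 𝕜)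
  have hV : V ∈ unitaryGroup n 𝕜 := hH.1.eigenvectorUnitary.2
  have hspec : gᴴ * g = V * diagonal (fun i => (hH.1.eigenvalues i : 𝕜)) * star V := by
    simpa [Function.comp_def] using hH.1.spectral_theorem
  set s : n → ℝ := fun i => √(hH.1.eigenvalues i)
  have hs : ∀ i, 0 < s i := fun i => Real.sqrt_pos.2 (hH.eigenvalues_pos i)
  have hs' : ∀ i, (s i : 𝕜) ≠ 0 := fun i => RCLike.ofReal_ne_zero.2 (hs i).ne'
  set D' : Matrix n n 𝕜 := diagonal fun i => (s i : 𝕜)⁻¹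
  have hD' : star D' = D' := by
    simp [D', star_eq_conjTranspose, diagonal_conjTranspose]
  refine ⟨g * V * D', ?_, star V, Unitary.star_mem hV, s, hs, ?_⟩
  · rw [mem_unitaryGroup_iff']
    calc star (g * V * D') * (g * V * D')
        = D' * (star V * (gᴴ * g) * V) * D' := by
          simp only [star_mul, hD', star_eq_conjTranspose, Matrix.mul_assoc]
      _ = 1 := by
          rw [hspec]
          simp only [Matrix.mul_assoc, Unitary.star_mul_self_of_mem hV, Matrix.mul_one]
          simp only [← Matrix.mul_assoc, Unitary.star_mul_self_of_mem hV, Matrix.one_mul]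
          simp only [D', diagonal_mul_diagonal, ← diagonal_one]
          congr 1; funext i
          have : (hH.1.eigenvalues i : 𝕜) = (s i : 𝕜) * (s i : 𝕜) := by
            rw [← RCLike.ofReal_mul, Real.mul_self_sqrt (hH.eigenvalues_pos i).le]
          rw [this]; field_simp [hs' i]
  · simp only [Matrix.mul_assoc (g * V), D', diagonal_mul_diagonal]
    simp [inv_mul_cancel₀ (hs' _), Matrix.mul_assoc, Unitary.mul_star_self_of_mem hV]

lemma swap_mem_unitaryGroup : !![(0 : ℂ), 1; 1, 0] ∈ unitaryGroup (Fin 2) ℂ := by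
  rw [mem_unitaryGroup_iff]
  ext i j; fin_cases i <;> fin_cases j <;> simp [mul_apply, star_apply]

theorem exists_unitary_mul_diagonal_mul_unitary_of_det_eq_one {g : Matrix (Fin 2) (Fin 2) ℂ}
    (hg : g.det = 1) :
    ∃ U ∈ unitaryGroup (Fin 2) ℂ, ∃ W ∈ unitaryGroup (Fin 2) ℂ, ∃ t : ℝ,
      0 < t ∧ t ≤ 1 ∧ g = U * diagonal ![(t : ℂ), (t : ℂ)⁻¹] * W := by
  obtain ⟨U, hU, W, hW, s, hs, rfl⟩ :=
    exists_unitary_mul_diagonal_mul_unitary (isUnit_iff_isUnit_det _ |>.2 (hg ▸ isUnit_one))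
  simp only [RCLike.ofReal_eq_complex_ofReal] at hg ⊢
  have hs01 : s 0 * s 1 = 1 := by
    have hUdet : ‖U.det‖ = 1 := CStarRing.norm_of_mem_unitary (det_of_mem_unitary hU)
    have hWdet : ‖W.det‖ = 1 := CStarRing.norm_of_mem_unitary (det_of_mem_unitary hW)
    have h := congrArg norm hg
    simp only [det_mul, norm_mul, hUdet, hWdet, det_diagonal, Fin.prod_univ_two,
      Complex.norm_of_nonneg (hs 0).le, Complex.norm_of_nonneg (hs 1).le, norm_one, one_mul,
      mul_one] at h
    exact h
  have hs1 : ((s 1 : ℝ) : ℂ) = ((s 0 : ℝ) : ℂ)⁻¹ :=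
    eq_inv_of_mul_eq_one_right (by exact_mod_cast hs01)
  rcases le_total (s 0) 1 with h0 | h0
  · refine ⟨U, hU, W, hW, s 0, hs 0, h0, ?_⟩
    congr 3; ext i; fin_cases i <;> simp [hs1]
  · -- conjugating by the swap matrix exchanges the two singular values
    set P : Matrix (Fin 2) (Fin 2) ℂ := !![0, 1; 1, 0]
    refine ⟨U * P, mul_mem hU swap_mem_unitaryGroup, P * W, mul_mem swap_mem_unitaryGroup hW,
      s 1, hs 1, ?_, ?_⟩
    · nlinarith [hs 0, hs 1]
    · have : P * diagonal ![((s 1 : ℝ) : ℂ), ((s 1 : ℝ) : ℂ)⁻¹] * P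
          = diagonal fun i => ((s i : ℝ) : ℂ) := by
        simp [P, diagonal_fin_two, hs1]
      rw [← this]
      simp only [Matrix.mul_assoc]

instance firstCountableTopology {m n R : Type*} [Countable m] [Countable n]
    [TopologicalSpace R] [FirstCountableTopology R] : FirstCountableTopology (Matrix m n R) :=
  inferInstanceAs (FirstCountableTopology (m → n → R))

lemma isCompact_unitaryGroup {𝕜 n : Type*} [RCLike 𝕜] [Fintype n] [DecidableEq n] :
    IsCompact (unitaryGroup n 𝕜 : Set (Matrix n n 𝕜)) :=
  (isCompact_univ_pi fun _ => isCompact_univ_pi fun _ => isCompact_closedBall (0 : 𝕜) 1)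
    |>.of_isClosed_subset (isClosed_unitary (R := Matrix n n 𝕜)) fun _ hU => by
      simpa using entry_norm_bound_of_unitary hU

lemma exists_det_eq_one_of_row {K : Type*} [Field K] {a b : K} (h : a ≠ 0 ∨ b ≠ 0) :
    ∃ M : Matrix (Fin 2) (Fin 2) K, M.det = 1 ∧ M 0 0 = a ∧ M 0 1 = b := by
  rcases h with ha | hb
  · exact ⟨!![a, b; 0, a⁻¹], by simp [det_fin_two, ha], rfl, rfl⟩
  · exact ⟨!![a, b; -b⁻¹, 0], by simp [det_fin_two, hb], rfl, rfl⟩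

end Matrix

namespace MvPolynomial

variable {σ R : Type*} [CommSemiring R]

lemma X_pow_dvd_of_forall_le {χ : MvPolynomial σ R} {i : σ} {m : ℕ}
    (h : ∀ d ∈ χ.support, m ≤ d i) : X i ^ m ∣ χ := by
  rw [χ.as_sum]
  refine Finset.dvd_sum fun d hd => ?_
  rw [X_pow_eq_monomial, monomial_dvd_monomial]
  exact ⟨.inr (Finsupp.single_le_iff.2 (h d hd)), one_dvd _⟩

lemma le_of_X_pow_dvd_of_mem_support {χ : MvPolynomial σ R} {i : σ} {m : ℕ} (h : X i ^ m ∣ χ)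
    {d : σ →₀ ℕ} (hd : d ∈ χ.support) : m ≤ d i := by
  obtain ⟨ρ, rfl⟩ := h
  by_contra hlt
  rw [mem_support_iff, X_pow_eq_monomial, coeff_monomial_mul', if_neg (by simpa using hlt)] at hd
  exact hd rfl

lemma IsHomogeneous.support_subset_finsuppAntidiag [Fintype σ] [DecidableEq σ]
    {χ : MvPolynomial σ R} {N : ℕ} (hχ : χ.IsHomogeneous N) :
    χ.support ⊆ Finset.finsuppAntidiag Finset.univ N := fun d hd => by
  rw [Finset.mem_finsuppAntidiag, ← Finsupp.degree_eq_sum, Finsupp.degree_eq_weight_one]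
  exact ⟨hχ (mem_support_iff.1 hd), Finset.subset_univ _⟩

lemma IsHomogeneous.add_eq_of_mem_support {χ : MvPolynomial (Fin 2) R} {N : ℕ}
    (hχ : χ.IsHomogeneous N) {d : Fin 2 →₀ ℕ} (hd : d ∈ χ.support) : d 0 + d 1 = N := by
  rw [← Fin.sum_univ_two, ← Finsupp.degree_eq_sum, Finsupp.degree_eq_weight_one]
  exact hχ (mem_support_iff.1 hd)

end MvPolynomial

namespace BinaryForm

open Filter Topology Matrix

lemma substAct_substAct (A B : Matrix (Fin 2) (Fin 2) ℂ) (φ : MvPolynomial (Fin 2) ℂ) :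
    substAct A (substAct B φ) = substAct (B * A) φ := by
  simp only [substAct, ← AlgHom.comp_apply, comp_aeval]
  congr 2; funext i
  simp [mul_apply, Fin.sum_univ_two]
  ring

lemma substAct_one (φ : MvPolynomial (Fin 2) ℂ) : substAct 1 φ = φ := by
  conv_rhs => rw [← aeval_X_left_apply φ]
  unfold substAct
  congr 2; funext i
  fin_cases i <;> simp [one_apply]

lemma substAct_X (g : Matrix (Fin 2) (Fin 2) ℂ) (i : Fin 2) :
    substAct g (X i) = C (g i 0) * X 0 + C (g i 1) * X 1 :=
  aeval_X _ _

lemma substAct_pow_dvd {g : Matrix (Fin 2) (Fin 2) ℂ} {L φ : MvPolynomial (Fin 2) ℂ} {m : ℕ}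
    (h : L ^ m ∣ φ) : substAct g L ^ m ∣ substAct g φ := by
  unfold substAct
  rw [← map_pow]
  exact map_dvd _ h

lemma _root_.MvPolynomial.IsHomogeneous.substAct {φ : MvPolynomial (Fin 2) ℂ} {N : ℕ}
    (hφ : φ.IsHomogeneous N) (g : Matrix (Fin 2) (Fin 2) ℂ) : (substAct g φ).IsHomogeneous N := by
  unfold _root_.substAct
  simpa only [one_mul] using hφ.aeval _ fun i =>
    (isHomogeneous_C_mul_X (g i 0) 0).add (isHomogeneous_C_mul_X (g i 1) 1)

lemma coeff_substAct_diagonal (v : Fin 2 → ℂ) (φ : MvPolynomial (Fin 2) ℂ) (d : Fin 2 →₀ ℕ) :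
    coeff d (substAct (diagonal v) φ) = v 0 ^ d 0 * v 1 ^ d 1 * coeff d φ := by
  induction φ using MvPolynomial.induction_on' with
  | monomial u a =>
    have : substAct (diagonal v) (monomial u a) = monomial u (v 0 ^ u 0 * v 1 ^ u 1 * a) := by
      simp [substAct, Finsupp.prod_fintype, Fin.prod_univ_two, monomial_eq,
        mul_pow, diagonal_apply]
      ring
    rw [this, coeff_monomial, coeff_monomial]
    split_ifs with h
    · subst h; rfl
    · simp
  | add p q hp hq => simp only [substAct, map_add, coeff_add] at *; rw [hp, hq]; ring

lemma continuous_coeff_substAct (φ : MvPolynomial (Fin 2) ℂ) (d : Fin 2 →₀ ℕ) :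
    Continuous fun g : Matrix (Fin 2) (Fin 2) ℂ => coeff d (substAct g φ) := by
  induction φ using MvPolynomial.induction_on generalizing d with
  | C a => simp [substAct, continuous_const]
  | add p q hp hq =>
    simp only [substAct, map_add, coeff_add] at *
    exact (hp d).add (hq d)
  | mul_X p i hp =>
    have h (g : Matrix (Fin 2) (Fin 2) ℂ) : substAct g (p * X i)
        = C (g i 0) * (substAct g p * X 0) + C (g i 1) * (substAct g p * X 1) := by
      simp only [substAct, map_mul, aeval_X]; ring
    simp only [h, coeff_add, coeff_C_mul, coeff_mul_X']
    refine .add ?_ ?_ <;> split_ifs <;> fun_prop (disch := exact hp _)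

lemma coeff_substAct_eq_sum (g : Matrix (Fin 2) (Fin 2) ℂ) {χ : MvPolynomial (Fin 2) ℂ}
    {S : Finset (Fin 2 →₀ ℕ)} (hS : χ.support ⊆ S) (d : Fin 2 →₀ ℕ) :
    coeff d (substAct g χ) = ∑ e ∈ S, coeff e χ * coeff d (substAct g (monomial e 1)) := by
  conv_lhs => rw [χ.as_sum, Finset.sum_subset hS fun e _ he => by
    rw [notMem_support_iff.1 he, monomial_zero]]
  simp only [substAct, map_sum, coeff_sum]
  refine Finset.sum_congr rfl fun e _ => ?_
  rw [show monomial e (coeff e χ) = coeff e χ • monomial e 1 by rw [smul_monomial, smul_eq_mul,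
    mul_one], map_smul, coeff_smul, smul_eq_mul]

lemma tendsto_toCoeff_substAct_of_tendsto_zero {ι : Type*} {l : Filter ι} {N : ℕ}
    {A : ι → Matrix (Fin 2) (Fin 2) ℂ} {A₀ : Matrix (Fin 2) (Fin 2) ℂ} (hA : Tendsto A l (𝓝 A₀))
    {χ : ι → MvPolynomial (Fin 2) ℂ} (hχ : ∀ i, (χ i).IsHomogeneous N)
    (h : Tendsto (fun i => toCoeff (χ i)) l (𝓝 0)) :
    Tendsto (fun i => toCoeff (substAct (A i) (χ i))) l (𝓝 0) := by
  refine tendsto_pi_nhds.2 fun d => ?_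
  simp only [toCoeff, coeff_substAct_eq_sum _ ((hχ _).support_subset_finsuppAntidiag)]
  rw [Pi.zero_apply, ← Finset.sum_const_zero]
  refine tendsto_finsetSum _ fun e _ => ?_
  rw [← zero_mul (coeff d (substAct A₀ (monomial e 1)))]
  exact (tendsto_pi_nhds.1 h e).mul ((continuous_coeff_substAct _ d).tendsto A₀ |>.comp hA)

lemma exists_det_eq_one_substAct_X_zero_eq {L : MvPolynomial (Fin 2) ℂ} (hL : L.IsHomogeneous 1)
    (hL0 : L ≠ 0) : ∃ M : Matrix (Fin 2) (Fin 2) ℂ, M.det = 1 ∧ substAct M (X 0) = L := by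
  rw [← mem_homogeneousSubmodule, homogeneousSubmodule_one_eq_span_X,
    Submodule.mem_span_range_iff_exists_fun] at hL
  obtain ⟨c, rfl⟩ := hL
  have hc : c 0 ≠ 0 ∨ c 1 ≠ 0 := by
    by_contra! h
    exact hL0 (by simp [h])
  obtain ⟨M, hM, h0, h1⟩ := exists_det_eq_one_of_row hc
  exact ⟨M, hM, by simp [substAct_X, h0, h1, Fin.sum_univ_two, smul_eq_C_mul]⟩

lemma coeff_substAct_eq_zero_of_tendsto {φ : MvPolynomial (Fin 2) ℂ}
    {U : ℕ → Matrix (Fin 2) (Fin 2) ℂ} {U₀ : Matrix (Fin 2) (Fin 2) ℂ}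
    (hU : Tendsto U atTop (𝓝 U₀)) {t : ℕ → ℝ} (ht0 : ∀ n, 0 < t n) (ht1 : ∀ n, t n ≤ 1)
    (h : Tendsto (fun n => toCoeff (substAct (U n * diagonal ![(t n : ℂ), (t n : ℂ)⁻¹]) φ))
      atTop (𝓝 0))
    {d : Fin 2 →₀ ℕ} (hd : d 0 ≤ d 1) : coeff d (substAct U₀ φ) = 0 := by
  have hle (n : ℕ) : ‖coeff d (substAct (U n) φ)‖
      ≤ ‖coeff d (substAct (U n * diagonal ![(t n : ℂ), (t n : ℂ)⁻¹]) φ)‖ := by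
    rw [← substAct_substAct, coeff_substAct_diagonal, norm_mul]
    refine le_mul_of_one_le_left (norm_nonneg _) ?_
    simp only [Fin.isValue, cons_val_zero, cons_val_one, norm_mul, norm_pow, norm_inv,
      Complex.norm_of_nonneg (ht0 n).le]
    calc (1 : ℝ) = t n ^ d 0 * (t n)⁻¹ ^ d 0 := by
          rw [← mul_pow, mul_inv_cancel₀ (ht0 n).ne', one_pow]
      _ ≤ t n ^ d 0 * (t n)⁻¹ ^ d 1 := by
          have : 1 ≤ (t n)⁻¹ := (one_le_inv₀ (ht0 n)).2 (ht1 n)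
          have := (ht0 n).le
          gcongr
  have hlim : Tendsto (fun n => ‖coeff d (substAct (U n) φ)‖) atTop
      (𝓝 ‖coeff d (substAct U₀ φ)‖) :=
    ((continuous_coeff_substAct φ d).tendsto U₀ |>.comp hU).norm
  have hlim₀ := (tendsto_pi_nhds.1 h d).norm
  rw [Pi.zero_apply, norm_zero] at hlim₀
  exact norm_le_zero_iff.1 (le_of_tendsto_of_tendsto' hlim hlim₀ hle)

lemma tendsto_toCoeff_substAct_diagonal {χ : MvPolynomial (Fin 2) ℂ} {N m : ℕ}
    (hχ : χ.IsHomogeneous N) (hdvd : X 0 ^ m ∣ χ) (hm : N < 2 * m) {c : ℕ → ℂ}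
    (hc : Tendsto c atTop (𝓝 0)) (hc0 : ∀ n, c n ≠ 0) :
    Tendsto (fun n => toCoeff (substAct (diagonal ![c n, (c n)⁻¹]) χ)) atTop (𝓝 0) := by
  refine tendsto_pi_nhds.2 fun d => ?_
  simp only [toCoeff, coeff_substAct_diagonal, Fin.isValue, cons_val_zero, cons_val_one,
    Pi.zero_apply]
  by_cases hd : d ∈ χ.support
  · have hd1 : d 1 < d 0 := by
      have hN := hχ.add_eq_of_mem_support hd
      have hmd := le_of_X_pow_dvd_of_mem_support hdvd hd
      omega
    have hpow (n : ℕ) : c n ^ d 0 * (c n)⁻¹ ^ d 1 = c n ^ (d 0 - d 1) := by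
      rw [pow_sub₀ _ (hc0 n) hd1.le, inv_pow]
    simp only [hpow]
    rw [← zero_mul (coeff d χ), ← zero_pow (Nat.sub_ne_zero_of_lt hd1)]
    exact (hc.pow _).mul_const _
  · simp [notMem_support_iff.1 hd]

theorem exists_pow_dvd_of_tendsto {N : ℕ} {φ : MvPolynomial (Fin 2) ℂ} (hφ : φ.IsHomogeneous N)
    {g : ℕ → Matrix (Fin 2) (Fin 2) ℂ} (hg : ∀ n, (g n).det = 1)
    (h : Tendsto (fun n => toCoeff (substAct (g n) φ)) atTop (𝓝 0)) :
    ∃ (L : MvPolynomial (Fin 2) ℂ) (m : ℕ),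
      L ≠ 0 ∧ L.IsHomogeneous 1 ∧ 2 * m > N ∧ L ^ m ∣ φ := by
  choose U hU W hW t ht0 ht1 hgUW using
    fun n => exists_unitary_mul_diagonal_mul_unitary_of_det_eq_one (hg n)
  obtain ⟨⟨U₀, W₀⟩, ⟨hU₀, -⟩, σ, hσ, hlim⟩ :=
    (isCompact_unitaryGroup.prod isCompact_unitaryGroup).tendsto_subseq
      (x := fun n => (U n, W n)) fun n => ⟨hU n, hW n⟩
  have hUD : Tendsto (fun k => toCoeff (substAct
      (U (σ k) * diagonal ![(t (σ k) : ℂ), (t (σ k) : ℂ)⁻¹]) φ)) atTop (𝓝 0) := by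
    refine (tendsto_toCoeff_substAct_of_tendsto_zero (continuous_star.tendsto W₀ |>.comp
      hlim.snd_nhds) (fun k => hφ.substAct (g (σ k))) (h.comp hσ.tendsto_atTop)).congr
      fun k => ?_
    simp only [Function.comp_apply, substAct_substAct, hgUW, Matrix.mul_assoc,
      Unitary.mul_star_self_of_mem (hW _), Matrix.mul_one]
  set χ := substAct U₀ φ
  have hdvd : X 0 ^ (N / 2 + 1) ∣ χ := X_pow_dvd_of_forall_le fun d hd => by
    have hN := (hφ.substAct U₀).add_eq_of_mem_support hd
    have hlt : d 1 < d 0 := lt_of_not_ge fun hle => mem_support_iff.1 hd <|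
      coeff_substAct_eq_zero_of_tendsto hlim.fst_nhds (fun k => ht0 (σ k)) (fun k => ht1 (σ k))
        hUD hle
    omega
  refine ⟨substAct (star U₀) (X 0), N / 2 + 1, fun h0 => ?_, (isHomogeneous_X ℂ 0).substAct _,
    by omega, ?_⟩
  · have := congrArg (substAct U₀) h0
    rw [substAct_substAct, Unitary.star_mul_self_of_mem hU₀, substAct_one] at this
    exact X_ne_zero 0 (this.trans (map_zero _))
  · simpa [χ, substAct_substAct, Unitary.mul_star_self_of_mem hU₀, substAct_one] using
      substAct_pow_dvd (g := star U₀) hdvd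

theorem exists_tendsto_of_pow_dvd {N : ℕ} {φ : MvPolynomial (Fin 2) ℂ} (hφ : φ.IsHomogeneous N)
    {L : MvPolynomial (Fin 2) ℂ} (hL : L.IsHomogeneous 1) (hL0 : L ≠ 0) {m : ℕ} (hm : N < 2 * m)
    (h : L ^ m ∣ φ) :
    ∃ g : ℕ → Matrix (Fin 2) (Fin 2) ℂ, (∀ n, (g n).det = 1) ∧
      Tendsto (fun n => toCoeff (substAct (g n) φ)) atTop (𝓝 0) := by
  obtain ⟨M, hM, rfl⟩ := exists_det_eq_one_substAct_X_zero_eq hL hL0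
  have hMinv : M * M⁻¹ = 1 := mul_nonsing_inv M (by simp [hM])
  have hdvd : X 0 ^ m ∣ substAct M⁻¹ φ := by
    simpa [substAct_substAct, hMinv, substAct_one] using substAct_pow_dvd (g := M⁻¹) h
  set c : ℕ → ℂ := fun n => 1 / ((n : ℂ) + 1)
  have hc0 (n : ℕ) : c n ≠ 0 := one_div_ne_zero (by exact_mod_cast n.succ_ne_zero)
  refine ⟨fun n => M⁻¹ * diagonal ![c n, (c n)⁻¹], fun n => ?_, ?_⟩
  · simp [det_nonsing_inv, hM, hc0 n]
  · simpa only [← substAct_substAct] using tendsto_toCoeff_substAct_diagonal (hφ.substAct _)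
      hdvd hm tendsto_one_div_add_atTop_nhds_zero_nat hc0

end BinaryForm

theorem zero_mem_closure_orbit_iff_general (N : ℕ) (φ : MvPolynomial (Fin 2) ℂ)
    (hhom : φ.IsHomogeneous N) :
    (0 : (Fin 2 →₀ ℕ) → ℂ) ∈
      closure (toCoeff '' {ψ | ∃ g : Matrix.SpecialLinearGroup (Fin 2) ℂ,
        ψ = substAct (g : Matrix (Fin 2) (Fin 2) ℂ) φ}) ↔
    ∃ (L : MvPolynomial (Fin 2) ℂ) (m : ℕ),
      L ≠ 0 ∧ L.IsHomogeneous 1 ∧ 2 * m > N ∧ L ^ m ∣ φ := by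
  constructor
  · intro h
    obtain ⟨x, hx, hlim⟩ := mem_closure_iff_seq_limit.1 h
    choose ψ hψ hxψ using hx
    choose g hg using hψ
    refine BinaryForm.exists_pow_dvd_of_tendsto hhom (fun n => (g n).2) (hlim.congr fun n => ?_)
    rw [← hxψ, hg]
  · rintro ⟨L, m, hL0, hL1, hm, hdvd⟩
    obtain ⟨g, hg, hlim⟩ := BinaryForm.exists_tendsto_of_pow_dvd hhom hL1 hL0 hm hdvd
    exact mem_closure_of_tendsto hlim
      (Filter.Eventually.of_forall fun n => ⟨_, ⟨⟨g n, hg n⟩, rfl⟩, rfl⟩)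

/-- A nonzero binary form `φ` of degree `N ≥ 1` has `0` in the closure of its
`SL(2,ℂ)`-orbit if and only if some nonzero linear form `L` divides `φ` with `L ^ m ∣ φ`
for some `m` with `2m > N` (instability in the GIT sense). -/
theorem zero_mem_closure_orbit_iff (N : ℕ) (hN : 1 ≤ N) (φ : MvPolynomial (Fin 2) ℂ)
    (hφ : φ ≠ 0) (hhom : φ.IsHomogeneous N) :
    (0 : (Fin 2 →₀ ℕ) → ℂ) ∈
      closure (toCoeff '' {ψ | ∃ g : Matrix.SpecialLinearGroup (Fin 2) ℂ,
        ψ = substAct (g : Matrix (Fin 2) (Fin 2) ℂ) φ}) ↔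
    ∃ (L : MvPolynomial (Fin 2) ℂ) (m : ℕ),
      L ≠ 0 ∧ L.IsHomogeneous 1 ∧ 2 * m > N ∧ L ^ m ∣ φ :=
  zero_mem_closure_orbit_iff_general N φ hhom
end

section
/- Let N and ℓ be natural numbers with ℓ < N. The function (x, y) ↦ (ℓ − N·(x²+y²)/(1+x²+y²) + (1−(x²+y²))/(1+x²+y²))·(x²+y²)^{ℓ}·2/(1+x²+y²)^{N+2} is integrable on ℝ² with respect to Lebesgue measure, and its integral over ℝ² equals 0. -/
/-!
With `s = x² + y²` the integrand is `g s = 2 (ℓ + 1 + (ℓ - N - 1) s) s^ℓ / (1 + s)^(N + 3)`, the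
derivative of `2 s^(ℓ+1) / (1 + s)^(N+2)`, which vanishes at `0` and, as `ℓ ≤ N`, at `∞`.
Polar coordinates give `∫_{ℝ²} g (x² + y²) = π ∫_0^∞ g`, hence the integral is `0`.
Integrability comes from `|g s| ≤ 2 (N + 1) / (1 + s)²`, since `(1 + s)²` dominates both
`1 + s²` and `(1 + x²)(1 + y²)`.
-/

open MeasureTheory Real Set Filter Topology

theorem integral_comp_sq_add_sq {E : Type*} [NormedAddCommGroup E] [NormedSpace ℝ E]
    (f : ℝ → E) : ∫ p : ℝ × ℝ, f (p.1 ^ 2 + p.2 ^ 2) = π • ∫ s in Ioi 0, f s := by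
  have hradial : ∫ r in Ioi (0 : ℝ), r • f (r ^ 2) = (2 : ℝ)⁻¹ • ∫ s in Ioi 0, f s := by
    rw [← integral_comp_rpow_Ioi f two_ne_zero, ← integral_smul]
    congr 1 with r
    norm_num [smul_smul]
    congr 1
    ring
  have hangle : (volume.restrict (Ioo (-π) π)).real univ = 2 * π := by
    rw [measureReal_restrict_apply_univ, Real.volume_real_Ioo_of_le (by linarith [pi_pos])]
    ring
  rw [← integral_comp_polarCoord_symm, polarCoord_target, Measure.volume_eq_prod,
    ← Measure.prod_restrict]
  simp only [polarCoord_symm_apply, mul_pow, ← mul_add, cos_sq_add_sin_sq, mul_one]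
  rw [integral_fun_fst (fun r => r • f (r ^ 2)), hradial, smul_smul, hangle]
  congr 1
  ring

section
variable {E : Type*} [NormedAddCommGroup E] {f : ℝ → E} {C : ℝ}

lemma integrableOn_Ioi_of_norm_le_div_one_add_sq (hf : StronglyMeasurable f)
    (hC : ∀ s, 0 ≤ s → ‖f s‖ ≤ C / (1 + s) ^ 2) : IntegrableOn f (Ioi 0) := by
  have hC0 : 0 ≤ C := by simpa using (norm_nonneg _).trans (hC 0 le_rfl)
  refine Integrable.mono' (integrable_inv_one_add_sq.const_mul C).integrableOn
    hf.aestronglyMeasurable ((ae_restrict_mem measurableSet_Ioi).mono fun s (hs : 0 < s) => ?_)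
  calc ‖f s‖ ≤ C / (1 + s) ^ 2 := hC s hs.le
    _ ≤ C / (1 + s ^ 2) := by gcongr; nlinarith
    _ = C * (1 + s ^ 2)⁻¹ := div_eq_mul_inv _ _

lemma integrable_comp_sq_add_sq_of_norm_le_div_one_add_sq (hf : StronglyMeasurable f)
    (hC : ∀ s, 0 ≤ s → ‖f s‖ ≤ C / (1 + s) ^ 2) :
    Integrable fun p : ℝ × ℝ => f (p.1 ^ 2 + p.2 ^ 2) := by
  have hC0 : 0 ≤ C := by simpa using (norm_nonneg _).trans (hC 0 le_rfl)
  refine Integrable.mono'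
    ((integrable_inv_one_add_sq.mul_prod integrable_inv_one_add_sq).const_mul C)
    (hf.comp_measurable (by fun_prop)).aestronglyMeasurable (ae_of_all _ fun p => ?_)
  calc ‖f (p.1 ^ 2 + p.2 ^ 2)‖ ≤ C / (1 + (p.1 ^ 2 + p.2 ^ 2)) ^ 2 := hC _ (by positivity)
    _ ≤ C / ((1 + p.1 ^ 2) * (1 + p.2 ^ 2)) := by gcongr; nlinarith [sq_nonneg (p.1 * p.2)]
    _ = C * ((1 + p.1 ^ 2)⁻¹ * (1 + p.2 ^ 2)⁻¹) := by rw [div_eq_mul_inv, mul_inv]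
end

noncomputable def futakiDensity (N ℓ : ℕ) (s : ℝ) : ℝ :=
  2 * ((ℓ + 1) + (ℓ - N - 1) * s) * s ^ ℓ / (1 + s) ^ (N + 3)

noncomputable def futakiPotential (N ℓ : ℕ) (s : ℝ) : ℝ :=
  2 * s ^ (ℓ + 1) / (1 + s) ^ (N + 2)

section
variable {N ℓ : ℕ} {s : ℝ}

lemma futakiDensity_eq (hs : 1 + s ≠ 0) :
    ((ℓ : ℝ) - N * s / (1 + s) + (1 - s) / (1 + s)) * s ^ ℓ * 2 / (1 + s) ^ (N + 2) =
      futakiDensity N ℓ s := by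
  rw [futakiDensity, pow_succ (1 + s) (N + 2)]
  field_simp
  ring

lemma hasDerivAt_futakiPotential (hs : 1 + s ≠ 0) :
    HasDerivAt (futakiPotential N ℓ) (futakiDensity N ℓ s) s := by
  have hnum : HasDerivAt (fun x : ℝ => 2 * x ^ (ℓ + 1)) (2 * ((ℓ + 1 : ℕ) * s ^ ℓ)) s := by
    simpa using (hasDerivAt_pow (ℓ + 1) s).const_mul 2
  have hden : HasDerivAt (fun x : ℝ => (1 + x) ^ (N + 2)) ((N + 2 : ℕ) * (1 + s) ^ (N + 1)) s := by
    simpa using ((hasDerivAt_id' s).const_add 1).fun_pow (N + 2)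
  refine (hnum.div hden (pow_ne_zero _ hs)).congr_deriv ?_
  rw [futakiDensity]
  field_simp
  push_cast
  ring

lemma measurable_futakiDensity : Measurable (futakiDensity N ℓ) := by
  unfold futakiDensity; fun_prop

lemma norm_futakiDensity_le (h : ℓ ≤ N) (hs : 0 ≤ s) :
    ‖futakiDensity N ℓ s‖ ≤ 2 * (N + 1) / (1 + s) ^ 2 := by
  rw [Real.norm_eq_abs]
  have hℓN : (ℓ : ℝ) ≤ N := by exact_mod_cast h
  have hlin : |(ℓ + 1 : ℝ) + (ℓ - N - 1) * s| ≤ (N + 1) * (1 + s) := by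
    rw [abs_le]; constructor <;> nlinarith [(ℓ.cast_nonneg : (0 : ℝ) ≤ ℓ)]
  have hpow : (1 + s) ^ (N + 3) = (1 + s) ^ (ℓ + 1) * (1 + s) ^ (N - ℓ) * (1 + s) ^ 2 := by
    rw [← pow_add, ← pow_add]; congr 1; omega
  have h1 : 1 ≤ 1 + s := by linarith
  calc |futakiDensity N ℓ s|
      = 2 * |(ℓ + 1 : ℝ) + (ℓ - N - 1) * s| * s ^ ℓ / (1 + s) ^ (N + 3) := by
        rw [futakiDensity, abs_div, abs_mul, abs_mul, abs_two,
          abs_of_nonneg (by positivity : 0 ≤ s ^ ℓ), abs_of_pos (by positivity : 0 < (1 + s) ^ (N + 3))]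
    _ ≤ 2 * ((N + 1) * (1 + s)) * (1 + s) ^ ℓ / ((1 + s) ^ (ℓ + 1) * 1 * (1 + s) ^ 2) := by
        rw [hpow]
        gcongr
        · linarith
        · exact one_le_pow₀ h1
    _ = 2 * (N + 1) / (1 + s) ^ 2 := by
        field_simp
        ring

lemma tendsto_futakiPotential_atTop (h : ℓ ≤ N) :
    Tendsto (futakiPotential N ℓ) atTop (𝓝 0) := by
  have hbound : ∀ᶠ s in atTop, futakiPotential N ℓ s ≤ 2 / (1 + s) := by
    filter_upwards [eventually_ge_atTop 0] with s hs
    have h1 : 1 ≤ 1 + s := by linarith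
    calc futakiPotential N ℓ s ≤ 2 * (1 + s) ^ (ℓ + 1) / (1 + s) ^ (ℓ + 2) := by
          unfold futakiPotential
          gcongr
          · linarith
      _ = 2 / (1 + s) := by field_simp; ring
  refine tendsto_of_tendsto_of_tendsto_of_le_of_le' tendsto_const_nhds ?_
    ((eventually_ge_atTop 0).mono fun s hs => by unfold futakiPotential; positivity) hbound
  exact tendsto_const_nhds.div_atTop (tendsto_atTop_add_const_left _ 1 tendsto_id)

lemma integral_futakiDensity_Ioi (h : ℓ ≤ N) : ∫ s in Ioi 0, futakiDensity N ℓ s = 0 := by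
  rw [integral_Ioi_of_hasDerivAt_of_tendsto
    (hasDerivAt_futakiPotential (by norm_num)).continuousAt.continuousWithinAt
    (fun s (hs : 0 < s) => hasDerivAt_futakiPotential (by positivity))
    (integrableOn_Ioi_of_norm_le_div_one_add_sq measurable_futakiDensity.stronglyMeasurable
      fun _ => norm_futakiDensity_le h)
    (tendsto_futakiPotential_atTop h)]
  simp [futakiPotential]
end

/-- The vanishing integral over `ℝ²` arising in the evaluation of the Futaki invariant:
`∫_{ℝ²} (ℓ − N s/(1+s) + (1−s)/(1+s)) · s^ℓ · 2/(1+s)^{N+2} dx dy = 0` with `s = x²+y²`,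
for `ℓ < N`. -/
theorem futaki_plane_integral_vanishing (N ℓ : ℕ) (h : ℓ < N) :
    Integrable
      (fun p : ℝ × ℝ =>
        ((ℓ : ℝ) - N * (p.1 ^ 2 + p.2 ^ 2) / (1 + p.1 ^ 2 + p.2 ^ 2) +
            (1 - (p.1 ^ 2 + p.2 ^ 2)) / (1 + p.1 ^ 2 + p.2 ^ 2)) *
          (p.1 ^ 2 + p.2 ^ 2) ^ ℓ * 2 / (1 + p.1 ^ 2 + p.2 ^ 2) ^ (N + 2)) ∧
    ∫ p : ℝ × ℝ,
        ((ℓ : ℝ) - N * (p.1 ^ 2 + p.2 ^ 2) / (1 + p.1 ^ 2 + p.2 ^ 2) +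
            (1 - (p.1 ^ 2 + p.2 ^ 2)) / (1 + p.1 ^ 2 + p.2 ^ 2)) *
          (p.1 ^ 2 + p.2 ^ 2) ^ ℓ * 2 / (1 + p.1 ^ 2 + p.2 ^ 2) ^ (N + 2) = 0 := by
  simp only [add_assoc, fun p : ℝ × ℝ => futakiDensity_eq (N := N) (ℓ := ℓ)
    (s := p.1 ^ 2 + p.2 ^ 2) (by positivity)]
  exact ⟨integrable_comp_sq_add_sq_of_norm_le_div_one_add_sq
      measurable_futakiDensity.stronglyMeasurable fun _ => norm_futakiDensity_le h.le,
    by rw [integral_comp_sq_add_sq, integral_futakiDensity_Ioi h.le, smul_zero]⟩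
end
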